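/- Fix q > 0, let Σ_n be a random permutation of [n] from the Mallows(q) distribution, let m ≥ 1 with n ≥ 2m, and let τ_m = 12⋯m be the increasing pattern. For a block α = {i, …, i+m−1} of m consecutive indices, let X_α be the indicator that red(Σ_{n|α}) = τ_m. Then E X_α = 1/I_m(q) for every such block α; if α and β are two blocks of m consecutive indices with no common element, then E[X_α X_β] = 1/I_m(q)²; and if α and β are two blocks of m consecutive indices sharing exactly s elements, 1 ≤ s ≤ m−1, then E[X_α X_β] = 1/I_{2m−s}(q). -/

import Mathlib

/-!
Every permutation `σ` of `Fin n` factors uniquely as `σ = τ * π̂`, where `π̂` rearranges a block of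
consecutive positions according to some `π ∈ S_m` and `τ` is increasing on the block (it lists the
block values of `σ` in sorted order). Since the block is an interval, `inv σ = inv τ + inv π`, so
for any event that does not see how the block is ordered, the Mallows weight of the event is the
weight of its intersection with "increasing on the block" times `I_m(q) = ∑_{π ∈ S_m} q ^ inv π`.
Taking the sure event gives `1 / I_m(q)`; taking "increasing on a disjoint block" gives
`1 / I_m(q)²`; and two increasing blocks sharing `s ≥ 1` positions are one increasing block of
length `2m - s`, which gives `1 / I_{2m-s}(q)`. The identity `∑_σ q ^ inv σ = I_n(q)` itself
follows by splitting off the first value `σ 0`, which is involved in exactly `σ 0` inversions.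
-/

open scoped Classical
open Filter

noncomputable section

/-- `τ` occurs in `σ` at the strictly increasing positions given by `f`:
`f` is strictly increasing and `σ ∘ f` is order-isomorphic to `τ`. -/
def OccursAt {m n : ℕ} (τ : Equiv.Perm (Fin m)) (σ : Equiv.Perm (Fin n))
    (f : Fin m → Fin n) : Prop :=
  StrictMono f ∧ ∀ k l, σ (f k) < σ (f l) ↔ τ k < τ l

/-- `τ` occurs in `σ` at the set of positions `α` (listed in increasing order). -/
def OccursOn {m n : ℕ} (τ : Equiv.Perm (Fin m)) (σ : Equiv.Perm (Fin n))
    (α : Finset (Fin n)) : Prop :=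
  ∃ f : Fin m → Fin n, StrictMono f ∧ Finset.univ.image f = α ∧
    ∀ k l, σ (f k) < σ (f l) ↔ τ k < τ l

/-- `τ` occurs in `σ` at the consecutive (0-indexed) positions `i, i+1, …, i+m-1`. -/
def OccursConsec {m n : ℕ} (τ : Equiv.Perm (Fin m)) (σ : Equiv.Perm (Fin n)) (i : ℕ) : Prop :=
  ∃ h : i + m ≤ n, ∀ k l : Fin m,
    σ ⟨i + k, by have := k.isLt; omega⟩ < σ ⟨i + l, by have := l.isLt; omega⟩ ↔ τ k < τ l

/-- The overlap count `L_s(τ)`: the number of permutations of `[2m-s]` containing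
two occurrences of `τ` at index sets sharing exactly `s` elements. -/
def overlapCount {m : ℕ} (τ : Equiv.Perm (Fin m)) (s : ℕ) : ℕ :=
  Set.ncard {ρ : Equiv.Perm (Fin (2 * m - s)) |
    ∃ α β : Finset (Fin (2 * m - s)), α.card = m ∧ β.card = m ∧ (α ∩ β).card = s ∧
      OccursOn τ ρ α ∧ OccursOn τ ρ β}

/-- The sequential overlap count `L̄_s(τ)`: the number of permutations of `[2m-s]` with
occurrences of `τ` at positions `(1,…,m)` and `(m-s+1,…,2m-s)`. -/
def seqOverlapCount {m : ℕ} (τ : Equiv.Perm (Fin m)) (s : ℕ) : ℕ :=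
  Set.ncard {ρ : Equiv.Perm (Fin (2 * m - s)) |
    OccursConsec τ ρ 0 ∧ OccursConsec τ ρ (m - s)}

/-- The number of inversions of a permutation. -/
def invCount {n : ℕ} (σ : Equiv.Perm (Fin n)) : ℕ :=
  (Finset.univ.filter fun p : Fin n × Fin n => p.1 < p.2 ∧ σ p.2 < σ p.1).card

/-- The inversion polynomial `I_n(q) = ∏_{j=1}^n (1 + q + ⋯ + q^{j-1})`. -/
def invPoly (n : ℕ) (q : ℝ) : ℝ :=
  ∏ j ∈ Finset.range n, ∑ i ∈ Finset.range (j + 1), q ^ i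

/-- Probability of the event `E` under the uniform distribution on `S_n`. -/
def unifProb {n : ℕ} (E : Set (Equiv.Perm (Fin n))) : ℝ :=
  (E.ncard : ℝ) / (n.factorial : ℝ)

/-- Probability of the event `E` under the Mallows(q) distribution on `S_n`. -/
def mallowsProb {n : ℕ} (q : ℝ) (E : Set (Equiv.Perm (Fin n))) : ℝ :=
  (∑ σ ∈ Finset.univ.filter (· ∈ E), q ^ invCount σ) / invPoly n q

/-- Expectation of `X` under the uniform distribution on `S_n`. -/
def unifExp {n : ℕ} (X : Equiv.Perm (Fin n) → ℝ) : ℝ :=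
  (∑ σ : Equiv.Perm (Fin n), X σ) / (n.factorial : ℝ)

/-- Expectation of `X` under the Mallows(q) distribution on `S_n`. -/
def mallowsExp {n : ℕ} (q : ℝ) (X : Equiv.Perm (Fin n) → ℝ) : ℝ :=
  (∑ σ : Equiv.Perm (Fin n), X σ * q ^ invCount σ) / invPoly n q

/-- The Poisson(lam) probability mass function. -/
def poissonPMF (lam : ℝ) (k : ℕ) : ℝ :=
  Real.exp (-lam) * lam ^ k / (k.factorial : ℝ)

/-- Total variation distance between the law of the ℕ-valued statistic `W` of a uniformly
random permutation of `[n]` and the Poisson(lam) distribution. -/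
def dTVNatUnif {n : ℕ} (W : Equiv.Perm (Fin n) → ℕ) (lam : ℝ) : ℝ :=
  (1 / 2) * ∑' k : ℕ, |unifProb {σ | W σ = k} - poissonPMF lam k|

/-- Total variation distance between the law of the ℕ-valued statistic `W` of a Mallows(q)
random permutation of `[n]` and the Poisson(lam) distribution. -/
def dTVNatMallows {n : ℕ} (q : ℝ) (W : Equiv.Perm (Fin n) → ℕ) (lam : ℝ) : ℝ :=
  (1 / 2) * ∑' k : ℕ, |mallowsProb q {σ | W σ = k} - poissonPMF lam k|

/-- Total variation distance between the joint law of the indicator family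
`(X_α)_{α ∈ I}` of a uniformly random permutation of `[n]` and the joint law of
independent Bernoulli random variables with marginals `p`. -/
def dTVFamUnif {n : ℕ} {I : Type*} [Fintype I] [DecidableEq I]
    (X : Equiv.Perm (Fin n) → I → Prop) (p : I → ℝ) : ℝ :=
  (1 / 2) * ∑ x : I → Bool,
    |unifProb {σ | ∀ α, X σ α ↔ x α = true} - ∏ α, (if x α then p α else 1 - p α)|

/-- Total variation distance between the joint law of the indicator family
`(X_α)_{α ∈ I}` of a Mallows(q) random permutation of `[n]` and the joint law of
independent Bernoulli random variables with marginals `p`. -/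
def dTVFamMallows {n : ℕ} (q : ℝ) {I : Type*} [Fintype I] [DecidableEq I]
    (X : Equiv.Perm (Fin n) → I → Prop) (p : I → ℝ) : ℝ :=
  (1 / 2) * ∑ x : I → Bool,
    |mallowsProb q {σ | ∀ α, X σ α ↔ x α = true} - ∏ α, (if x α then p α else 1 - p α)|

open Equiv Equiv.Perm

namespace Equiv.Perm

variable {n : ℕ}

def insertPerm (p : Fin (n + 1)) (e : Perm (Fin n)) : Perm (Fin (n + 1)) :=
  (finSuccEquiv n).trans (e.optionCongr.trans (finSuccEquiv' p).symm)

@[simp] lemma insertPerm_zero (p : Fin (n + 1)) (e : Perm (Fin n)) : insertPerm p e 0 = p := by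
  simp [insertPerm]

@[simp] lemma insertPerm_succ (p : Fin (n + 1)) (e : Perm (Fin n)) (i : Fin n) :
    insertPerm p e i.succ = p.succAbove (e i) := by
  simp [insertPerm]

lemma insertPerm_injective :
    Function.Injective fun pe : Fin (n + 1) × Perm (Fin n) => insertPerm pe.1 pe.2 := by
  rintro ⟨p₁, e₁⟩ ⟨p₂, e₂⟩ h
  have hp : p₁ = p₂ := by simpa using congr($h 0)
  subst hp
  refine Prod.ext rfl (Equiv.ext fun i => Fin.succAbove_right_injective (p := p₁) ?_)
  simpa using congr($h i.succ)

lemma insertPerm_bijective :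
    Function.Bijective fun pe : Fin (n + 1) × Perm (Fin n) => insertPerm pe.1 pe.2 := by
  rw [Fintype.bijective_iff_injective_and_card]
  exact ⟨insertPerm_injective, by simp [Fintype.card_perm, Nat.factorial_succ]⟩

end Equiv.Perm

lemma invCount_eq_sum {n : ℕ} (σ : Perm (Fin n)) :
    invCount σ = ∑ x, ∑ y, if x < y ∧ σ y < σ x then 1 else 0 := by
  rw [invCount, Finset.card_filter, Fintype.sum_prod_type]

lemma card_filter_apply_lt {n : ℕ} (σ : Perm (Fin n)) (x : Fin n) :
    (Finset.univ.filter fun y => σ y < σ x).card = σ x := by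
  rw [← Fin.card_Iio (σ x), ← Finset.card_map σ.toEmbedding]
  congr 1
  ext v
  simp

lemma invCount_insertPerm {n : ℕ} (p : Fin (n + 1)) (e : Perm (Fin n)) :
    invCount (insertPerm p e) = p + invCount e := by
  rw [invCount_eq_sum, Fin.sum_univ_succ, invCount_eq_sum]
  congr 1
  · rw [← insertPerm_zero p e, ← card_filter_apply_lt, Finset.card_filter]
    refine Finset.sum_congr rfl fun y _ => ?_
    by_cases hy : y = 0
    · simp [hy]
    · simp [hy, Fin.pos_iff_ne_zero]
  · refine Finset.sum_congr rfl fun x _ => ?_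
    rw [Fin.sum_univ_succ]
    simp [Fin.succ_lt_succ_iff, Fin.succAbove_lt_succAbove_iff]

lemma sum_pow_invCount (q : ℝ) (n : ℕ) : ∑ σ : Perm (Fin n), q ^ invCount σ = invPoly n q := by
  induction n with
  | zero => simp [invPoly, invCount]
  | succ n ih =>
    rw [← Fintype.sum_bijective _ insertPerm_bijective
      (fun pe => q ^ ((pe.1 : ℕ) + invCount pe.2)) _ fun pe => by rw [invCount_insertPerm],
      Fintype.sum_prod_type]
    simp only [pow_add, ← Finset.sum_mul_sum, ih, invPoly, Finset.prod_range_succ,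
      Fin.sum_univ_eq_sum_range (fun i => q ^ i) (n + 1), mul_comm]

lemma invPoly_pos (m : ℕ) {q : ℝ} (hq : 0 < q) : 0 < invPoly m q :=
  Finset.prod_pos fun j _ => Finset.sum_pos (fun i _ => pow_pos hq i) ⟨0, by simp⟩

section Block

variable {m n : ℕ} (e : Fin m ↪o Fin n)

def blockPerm : Perm (Fin m) →* Perm (Fin n) := viaEmbeddingHom e.toEmbedding

variable {e}

@[simp] lemma blockPerm_apply_self (π : Perm (Fin m)) (k : Fin m) :
    blockPerm e π (e k) = e (π k) :=
  viaEmbedding_apply π e.toEmbedding k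

lemma blockPerm_apply_of_notMem (π : Perm (Fin m)) {x : Fin n} (hx : x ∉ Set.range e) :
    blockPerm e π x = x :=
  viaEmbedding_apply_of_notMem π e.toEmbedding x hx

lemma blockPerm_mem_range_iff (π : Perm (Fin m)) (x : Fin n) :
    blockPerm e π x ∈ Set.range e ↔ x ∈ Set.range e := by
  constructor
  · intro hx
    by_contra h
    exact h (blockPerm_apply_of_notMem π h ▸ hx)
  · rintro ⟨k, rfl⟩
    exact ⟨π k, (blockPerm_apply_self π k).symm⟩

lemma blockPerm_lt_blockPerm (hR : (Set.range e).OrdConnected) (π : Perm (Fin m)) {x y : Fin n}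
    (hxy : x < y) (hout : ¬(x ∈ Set.range e ∧ y ∈ Set.range e)) :
    blockPerm e π x < blockPerm e π y := by
  have hπR := blockPerm_mem_range_iff (e := e) π
  by_cases hx : x ∈ Set.range e <;> by_cases hy : y ∈ Set.range e
  · exact absurd ⟨hx, hy⟩ hout
  · rw [blockPerm_apply_of_notMem π hy]
    exact lt_of_not_ge fun h => hy (hR.out hx ((hπR x).2 hx) ⟨hxy.le, h⟩)
  · rw [blockPerm_apply_of_notMem π hx]
    exact lt_of_not_ge fun h => hx (hR.out ((hπR y).2 hy) hy ⟨h, hxy.le⟩)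
  · rwa [blockPerm_apply_of_notMem π hx, blockPerm_apply_of_notMem π hy]

end Block

section Inversions

variable {m n : ℕ} {e : Fin m ↪o Fin n}

def inversions (σ : Perm (Fin n)) : Finset (Fin n × Fin n) :=
  Finset.univ.filter fun p => p.1 < p.2 ∧ σ p.2 < σ p.1

@[simp] lemma mem_inversions {σ : Perm (Fin n)} {p : Fin n × Fin n} :
    p ∈ inversions σ ↔ p.1 < p.2 ∧ σ p.2 < σ p.1 := by
  simp [inversions]

lemma invCount_eq_card_inversions (σ : Perm (Fin n)) : invCount σ = (inversions σ).card := rfl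

variable (e) in
def InRange (p : Fin n × Fin n) : Prop := p.1 ∈ Set.range e ∧ p.2 ∈ Set.range e

lemma inversions_filter_inRange_eq_empty {σ : Perm (Fin n)} (hσ : StrictMono (σ ∘ e)) :
    (inversions σ).filter (InRange e) = ∅ := by
  refine Finset.filter_eq_empty_iff.2 ?_
  rintro ⟨_, _⟩ h ⟨⟨a, rfl⟩, ⟨b, rfl⟩⟩
  rw [mem_inversions] at h
  exact h.2.not_gt (hσ (e.lt_iff_lt.1 h.1))

lemma card_inversions_mul_blockPerm_filter_inRange {σ : Perm (Fin n)}
    (hσ : StrictMono (σ ∘ e)) (π : Perm (Fin m)) :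
    ((inversions (σ * blockPerm e π)).filter (InRange e)).card = invCount π := by
  symm
  refine Finset.card_nbij (Prod.map e e) ?_ (e.injective.prodMap e.injective).injOn ?_
  · rintro ⟨a, b⟩ h
    simp only [Finset.coe_filter, mem_inversions, Set.mem_ofPred_eq, Finset.mem_univ,
      true_and] at h ⊢
    refine ⟨⟨e.lt_iff_lt.2 h.1, ?_⟩, ⟨a, rfl⟩, ⟨b, rfl⟩⟩
    simpa using hσ h.2
  · rintro ⟨_, _⟩ h
    simp only [Finset.coe_filter, mem_inversions, InRange, Set.mem_ofPred_eq] at h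
    obtain ⟨⟨hlt, hinv⟩, ⟨a, rfl⟩, ⟨b, rfl⟩⟩ := h
    refine ⟨(a, b), ?_, rfl⟩
    simp only [Finset.coe_filter, Finset.mem_univ, true_and, Set.mem_ofPred_eq]
    simp only [Perm.mul_apply, blockPerm_apply_self] at hinv
    exact ⟨e.lt_iff_lt.1 hlt, hσ.lt_iff_lt.1 hinv⟩

lemma mapsTo_inversions_mul_blockPerm_filter_not_inRange (hR : (Set.range e).OrdConnected)
    (τ : Perm (Fin n)) (π : Perm (Fin m)) :
    Set.MapsTo (Prod.map (blockPerm e π) (blockPerm e π))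
      ((inversions (τ * blockPerm e π)).filter (¬InRange e ·))
      ((inversions τ).filter (¬InRange e ·)) := by
  rintro ⟨x, y⟩ h
  obtain ⟨hxy, hout⟩ := Finset.mem_filter.1 (Finset.mem_coe.1 h)
  obtain ⟨hlt, hinv⟩ := mem_inversions.1 hxy
  refine Finset.mem_filter.2 ⟨mem_inversions.2 ⟨blockPerm_lt_blockPerm hR π hlt hout, hinv⟩, ?_⟩
  simpa only [InRange, Prod.map_fst, Prod.map_snd, blockPerm_mem_range_iff] using hout

lemma card_inversions_mul_blockPerm_filter_not_inRange (hR : (Set.range e).OrdConnected)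
    (σ : Perm (Fin n)) (π : Perm (Fin m)) :
    ((inversions (σ * blockPerm e π)).filter (¬InRange e ·)).card =
      ((inversions σ).filter (¬InRange e ·)).card := by
  have hback := mapsTo_inversions_mul_blockPerm_filter_not_inRange hR (σ * blockPerm e π) π⁻¹
  rw [map_inv, mul_inv_cancel_right] at hback
  refine Finset.card_nbij' _ _ (mapsTo_inversions_mul_blockPerm_filter_not_inRange hR σ π)
    hback (fun p _ => ?_) (fun p _ => ?_) <;> exact Prod.ext (by simp) (by simp)

lemma invCount_mul_blockPerm (hR : (Set.range e).OrdConnected) {σ : Perm (Fin n)}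
    (hσ : StrictMono (σ ∘ e)) (π : Perm (Fin m)) :
    invCount (σ * blockPerm e π) = invCount σ + invCount π := by
  rw [invCount_eq_card_inversions, invCount_eq_card_inversions σ,
    ← Finset.card_filter_add_card_filter_not (s := inversions (σ * blockPerm e π)) (InRange e),
    ← Finset.card_filter_add_card_filter_not (s := inversions σ) (InRange e),
    card_inversions_mul_blockPerm_filter_inRange hσ, inversions_filter_inRange_eq_empty hσ,
    card_inversions_mul_blockPerm_filter_not_inRange hR, Finset.card_empty]
  omega

end Inversions

section Decomposition

variable {m n : ℕ} {e : Fin m ↪o Fin n}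

lemma exists_strictMono_comp_mul_blockPerm_eq (σ : Perm (Fin n)) :
    ∃ τ : Perm (Fin n), ∃ π : Perm (Fin m), StrictMono (τ ∘ e) ∧ τ * blockPerm e π = σ := by
  set s := Tuple.sort (σ ∘ e)
  refine ⟨σ * blockPerm e s, s⁻¹, ?_, by rw [map_inv, mul_inv_cancel_right]⟩
  have hcomp : (σ * blockPerm e s) ∘ e = (σ ∘ e) ∘ s := by
    funext k
    simp
  rw [hcomp]
  exact (Tuple.monotone_sort _).strictMono_of_injective
    ((σ.injective.comp e.injective).comp s.injective)

lemma eq_of_strictMono_comp_of_mul_blockPerm_eq {τ₁ τ₂ : Perm (Fin n)} {π₁ π₂ : Perm (Fin m)}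
    (h₁ : StrictMono (τ₁ ∘ e)) (h₂ : StrictMono (τ₂ ∘ e))
    (h : τ₁ * blockPerm e π₁ = τ₂ * blockPerm e π₂) : τ₁ = τ₂ ∧ π₁ = π₂ := by
  set π := π₂ * π₁⁻¹
  have hτ : τ₁ = τ₂ * blockPerm e π := by
    rw [map_mul, map_inv, ← mul_assoc, ← h, mul_inv_cancel_right]
  have hπ : StrictMono π := fun a b hab => by
    have := h₁ hab
    simp only [hτ, Function.comp_apply, Perm.mul_apply, blockPerm_apply_self] at this
    exact h₂.lt_iff_lt.1 this
  have hπ1 : π = 1 := Equiv.ext fun k =>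
    congrFun ((hπ.range_inj strictMono_id).1 (by simp [π.range_eq_univ])) k
  rw [hπ1, map_one, mul_one] at hτ
  exact ⟨hτ, (mul_inv_eq_one.1 hπ1).symm⟩

lemma sum_filter_and_strictMono_comp_mul_invPoly (hR : (Set.range e).OrdConnected) (q : ℝ)
    (F : Perm (Fin n) → Prop) (hF : ∀ σ π, F (σ * blockPerm e π) ↔ F σ) :
    (∑ σ ∈ Finset.univ.filter (fun σ => F σ ∧ StrictMono (σ ∘ e)), q ^ invCount σ) *
        invPoly m q = ∑ σ ∈ Finset.univ.filter F, q ^ invCount σ := by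
  rw [← sum_pow_invCount, Finset.sum_mul_sum, ← Finset.sum_product']
  refine Finset.sum_bij (fun p _ => p.1 * blockPerm e p.2) ?_ ?_ ?_ ?_
  · rintro ⟨τ, π⟩ h
    simp only [Finset.mem_product, Finset.mem_filter, Finset.mem_univ, true_and, and_true] at h ⊢
    exact (hF τ π).2 h.1
  · rintro ⟨τ₁, π₁⟩ h₁ ⟨τ₂, π₂⟩ h₂ h
    simp only [Finset.mem_product, Finset.mem_filter, Finset.mem_univ, true_and, and_true] at h₁ h₂
    obtain ⟨rfl, rfl⟩ := eq_of_strictMono_comp_of_mul_blockPerm_eq h₁.2 h₂.2 h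
    rfl
  · intro σ hσ
    obtain ⟨τ, π, hτ, rfl⟩ := exists_strictMono_comp_mul_blockPerm_eq (e := e) σ
    simp only [Finset.mem_filter, Finset.mem_univ, true_and] at hσ
    exact ⟨(τ, π), by simpa [hτ] using (hF τ π).1 hσ, rfl⟩
  · rintro ⟨τ, π⟩ h
    simp only [Finset.mem_product, Finset.mem_filter, Finset.mem_univ, true_and, and_true] at h
    rw [invCount_mul_blockPerm hR h.2, pow_add]

lemma mallowsProb_and_strictMono_comp (hR : (Set.range e).OrdConnected) {q : ℝ}
    (hm : invPoly m q ≠ 0) (F : Perm (Fin n) → Prop) (hF : ∀ σ π, F (σ * blockPerm e π) ↔ F σ) :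
    mallowsProb q {σ | F σ ∧ StrictMono (σ ∘ e)} = mallowsProb q {σ | F σ} / invPoly m q := by
  simp only [mallowsProb, Set.mem_ofPred_eq]
  rw [← sum_filter_and_strictMono_comp_mul_invPoly hR q F hF]
  field_simp

end Decomposition

lemma mallowsProb_univ {n : ℕ} {q : ℝ} (hn : invPoly n q ≠ 0) :
    mallowsProb q (Set.univ : Set (Perm (Fin n))) = 1 := by
  simp [mallowsProb, sum_pow_invCount, hn]

lemma mallowsProb_strictMono_comp {m n : ℕ} {e : Fin m ↪o Fin n} (hR : (Set.range e).OrdConnected)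
    {q : ℝ} (hm : invPoly m q ≠ 0) (hn : invPoly n q ≠ 0) :
    mallowsProb q {σ | StrictMono (σ ∘ e)} = 1 / invPoly m q := by
  have h := mallowsProb_and_strictMono_comp hR hm (fun _ => True) fun _ _ => Iff.rfl
  rw [Set.ofPred_true, mallowsProb_univ hn] at h
  simpa using h

lemma mallowsProb_strictMono_comp_and_strictMono_comp {m m' n : ℕ} {e : Fin m ↪o Fin n}
    {e' : Fin m' ↪o Fin n} (hR : (Set.range e).OrdConnected) (hR' : (Set.range e').OrdConnected)
    (hdisj : Disjoint (Set.range e) (Set.range e')) {q : ℝ} (hm : invPoly m q ≠ 0)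
    (hm' : invPoly m' q ≠ 0) (hn : invPoly n q ≠ 0) :
    mallowsProb q {σ | StrictMono (σ ∘ e) ∧ StrictMono (σ ∘ e')} =
      1 / (invPoly m q * invPoly m' q) := by
  have hF (σ : Perm (Fin n)) (π : Perm (Fin m')) :
      StrictMono ((σ * blockPerm e' π) ∘ e) ↔ StrictMono (σ ∘ e) := by
    have : (σ * blockPerm e' π) ∘ e = σ ∘ e := funext fun k => by
      simp [blockPerm_apply_of_notMem π (hdisj.notMem_of_mem_left (Set.mem_range_self k))]
    rw [this]
  rw [mallowsProb_and_strictMono_comp hR' hm' _ hF, mallowsProb_strictMono_comp hR hm hn]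
  field_simp

lemma strictMono_comp_iff_strictMonoOn_range {α β γ : Type*} [Preorder α] [Preorder β]
    [Preorder γ] (e : α ↪o β) {f : β → γ} :
    StrictMono (f ∘ e) ↔ StrictMonoOn f (Set.range e) := by
  constructor
  · rintro hf _ ⟨a, rfl⟩ _ ⟨b, rfl⟩ hab
    exact hf (e.lt_iff_lt.1 hab)
  · exact fun hf a b hab => hf ⟨a, rfl⟩ ⟨b, rfl⟩ (e.strictMono hab)

section Consecutive

variable {n : ℕ}

def blockEmb (i m : ℕ) (h : i + m ≤ n) : Fin m ↪o Fin n :=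
  (Fin.natAddOrderEmb i).trans (Fin.castLEOrderEmb h)

@[simp] lemma blockEmb_apply {i m : ℕ} (h : i + m ≤ n) (k : Fin m) :
    blockEmb i m h k = ⟨i + k, by omega⟩ := rfl

lemma range_blockEmb {i m : ℕ} (h : i + m ≤ n) :
    Set.range (blockEmb i m h) = {x : Fin n | i ≤ (x : ℕ) ∧ (x : ℕ) < i + m} := by
  ext x
  constructor
  · rintro ⟨k, rfl⟩
    simp
  · rintro ⟨hix, hxi⟩
    exact ⟨⟨x - i, by omega⟩, Fin.ext (by simp; omega)⟩

lemma ordConnected_range_blockEmb {i m : ℕ} (h : i + m ≤ n) :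
    (Set.range (blockEmb i m h)).OrdConnected := by
  rw [range_blockEmb]
  exact ⟨fun x hx y hy z hz => ⟨hx.1.trans (Fin.le_def.1 hz.1), (Fin.le_def.1 hz.2).trans_lt hy.2⟩⟩

lemma occursConsec_refl_iff (σ : Perm (Fin n)) {i m : ℕ} (h : i + m ≤ n) :
    OccursConsec (Equiv.refl (Fin m)) σ i ↔ StrictMono (σ ∘ blockEmb i m h) :=
  ⟨fun ⟨_, H⟩ a b hab => (H a b).2 hab, fun hσ => ⟨h, fun _ _ => hσ.lt_iff_lt⟩⟩

lemma strictMonoOn_union_of_overlap {α : Type*} [Preorder α] {f : Fin n → α} {i j k l : ℕ}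
    (hij : i ≤ j) (hjk : j < k) (hkl : k ≤ l) (hl : l ≤ n) :
    StrictMonoOn f {x | i ≤ (x : ℕ) ∧ (x : ℕ) < k} ∧
        StrictMonoOn f {x | j ≤ (x : ℕ) ∧ (x : ℕ) < l} ↔
      StrictMonoOn f {x | i ≤ (x : ℕ) ∧ (x : ℕ) < l} := by
  constructor
  · rintro ⟨hik, hjl⟩
    have hunion : {x : Fin n | i ≤ (x : ℕ) ∧ (x : ℕ) < l} =
        {x : Fin n | i ≤ (x : ℕ) ∧ (x : ℕ) ≤ j} ∪ {x | j ≤ (x : ℕ) ∧ (x : ℕ) < l} := by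
      ext x
      simp only [Set.mem_union, Set.mem_ofPred_eq]
      omega
    rw [hunion]
    refine (hik.mono fun x hx => ⟨hx.1, hx.2.trans_lt hjk⟩).union hjl (c := ⟨j, by omega⟩)
      ⟨⟨hij, le_rfl⟩, fun x hx => Fin.le_def.2 hx.2⟩
      ⟨⟨le_rfl, hjk.trans_le hkl⟩, fun x hx => Fin.le_def.2 hx.1⟩
  · exact fun h => ⟨h.mono fun x hx => ⟨hx.1, hx.2.trans_le hkl⟩,
      h.mono fun x hx => ⟨hij.trans hx.1, hx.2⟩⟩

lemma occursConsec_refl_and_occursConsec_refl_iff (σ : Perm (Fin n)) {i j m k : ℕ}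
    (hij : i ≤ j) (hji : j < i + m) (hk : j + m = i + k) :
    OccursConsec (Equiv.refl (Fin m)) σ i ∧ OccursConsec (Equiv.refl (Fin m)) σ j ↔
      OccursConsec (Equiv.refl (Fin k)) σ i := by
  by_cases hn : j + m ≤ n
  · rw [occursConsec_refl_iff σ (by omega : i + m ≤ n), occursConsec_refl_iff σ hn,
      occursConsec_refl_iff σ (by omega : i + k ≤ n), strictMono_comp_iff_strictMonoOn_range,
      strictMono_comp_iff_strictMonoOn_range, strictMono_comp_iff_strictMonoOn_range,
      range_blockEmb, range_blockEmb, range_blockEmb, ← hk]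
    exact strictMonoOn_union_of_overlap hij hji (by omega) hn
  · exact ⟨fun ⟨_, ⟨h, _⟩⟩ => absurd h hn, fun ⟨h, _⟩ => absurd (hk ▸ h) hn⟩

end Consecutive

lemma mallowsProb_occursConsec_refl {q : ℝ} (hq : 0 < q) {n m i : ℕ} (h : i + m ≤ n) :
    mallowsProb q {σ : Perm (Fin n) | OccursConsec (Equiv.refl (Fin m)) σ i} = 1 / invPoly m q := by
  simp_rw [occursConsec_refl_iff _ h]
  exact mallowsProb_strictMono_comp (ordConnected_range_blockEmb h) (invPoly_pos m hq).ne'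
    (invPoly_pos n hq).ne'

lemma mallowsProb_occursConsec_refl_and_of_disjoint {q : ℝ} (hq : 0 < q) {n m i i' : ℕ}
    (hi : i + m ≤ n) (hi' : i' + m ≤ n) (hsep : i + m ≤ i' ∨ i' + m ≤ i) :
    mallowsProb q {σ : Perm (Fin n) |
        OccursConsec (Equiv.refl (Fin m)) σ i ∧ OccursConsec (Equiv.refl (Fin m)) σ i'} =
      1 / invPoly m q ^ 2 := by
  have hdisj : Disjoint (Set.range (blockEmb i m hi)) (Set.range (blockEmb i' m hi')) := by
    rw [range_blockEmb, range_blockEmb, Set.disjoint_left]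
    intro x hx hx'
    simp only [Set.mem_ofPred_eq] at hx hx'
    omega
  simp_rw [occursConsec_refl_iff _ hi, occursConsec_refl_iff _ hi']
  rw [mallowsProb_strictMono_comp_and_strictMono_comp (ordConnected_range_blockEmb hi)
    (ordConnected_range_blockEmb hi') hdisj (invPoly_pos m hq).ne' (invPoly_pos m hq).ne'
    (invPoly_pos n hq).ne', sq]

theorem stmt15_general (q : ℝ) (hq : 0 < q) (n m : ℕ) :
    (∀ i : ℕ, i + m ≤ n →
      mallowsProb q {πn : Equiv.Perm (Fin n) | OccursConsec (Equiv.refl (Fin m)) πn i}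
        = 1 / invPoly m q)
    ∧ (∀ i i' : ℕ, i + m ≤ n → i' + m ≤ n → (i + m ≤ i' ∨ i' + m ≤ i) →
      mallowsProb q {πn : Equiv.Perm (Fin n) |
          OccursConsec (Equiv.refl (Fin m)) πn i ∧ OccursConsec (Equiv.refl (Fin m)) πn i'}
        = 1 / (invPoly m q) ^ 2)
    ∧ (∀ s i i' : ℕ, 1 ≤ s → s ≤ m - 1 → i + m ≤ n → i' + m ≤ n →
        (i' = i + (m - s) ∨ i = i' + (m - s)) →
      mallowsProb q {πn : Equiv.Perm (Fin n) |
          OccursConsec (Equiv.refl (Fin m)) πn i ∧ OccursConsec (Equiv.refl (Fin m)) πn i'}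
        = 1 / invPoly (2 * m - s) q) := by
  refine ⟨fun i hi => mallowsProb_occursConsec_refl hq hi,
    fun i i' hi hi' hsep => mallowsProb_occursConsec_refl_and_of_disjoint hq hi hi' hsep,
    fun s i i' hs hsm hi hi' hii => ?_⟩
  rcases hii with rfl | rfl
  · simp_rw [occursConsec_refl_and_occursConsec_refl_iff _ (Nat.le_add_right i (m - s))
      (by omega) (by omega : i + (m - s) + m = i + (2 * m - s))]
    exact mallowsProb_occursConsec_refl hq (by omega)
  · simp_rw [and_comm,
      occursConsec_refl_and_occursConsec_refl_iff _ (Nat.le_add_right i' (m - s)) (by omega)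
        (by omega : i' + (m - s) + m = i' + (2 * m - s))]
    exact mallowsProb_occursConsec_refl hq (by omega)

/-- Lemma: first and second moments of the indicators of increasing blocks of `m`
consecutive positions of a Mallows(q) permutation of `[n]`. -/
theorem stmt15 (q : ℝ) (hq : 0 < q) (n m : ℕ) (hm : 1 ≤ m) (hn : 2 * m ≤ n) :
    (∀ i : ℕ, i + m ≤ n →
      mallowsProb q {πn : Equiv.Perm (Fin n) | OccursConsec (Equiv.refl (Fin m)) πn i}
        = 1 / invPoly m q)
    ∧ (∀ i i' : ℕ, i + m ≤ n → i' + m ≤ n → (i + m ≤ i' ∨ i' + m ≤ i) →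
      mallowsProb q {πn : Equiv.Perm (Fin n) |
          OccursConsec (Equiv.refl (Fin m)) πn i ∧ OccursConsec (Equiv.refl (Fin m)) πn i'}
        = 1 / (invPoly m q) ^ 2)
    ∧ (∀ s i i' : ℕ, 1 ≤ s → s ≤ m - 1 → i + m ≤ n → i' + m ≤ n →
        (i' = i + (m - s) ∨ i = i' + (m - s)) →
      mallowsProb q {πn : Equiv.Perm (Fin n) |
          OccursConsec (Equiv.refl (Fin m)) πn i ∧ OccursConsec (Equiv.refl (Fin m)) πn i'}
        = 1 / invPoly (2 * m - s) q) :=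
  stmt15_general q hq n m
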